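/- Let F : F_{2^n} → F_{2^n} be an o-polynomial. Then Σ_{b ∈ F_{2^n}^*} Σ_{v_1, v_2 ∈ F_{2^n}} W_F(b v_1, v_1)·W_F(b v_2, v_2)·W_F(b(v_1+v_2), v_1+v_2) = (2^n − 1)·2^{3n+2}. -/

import Mathlib

open scoped Classical
open Finset

noncomputable instance (n : ℕ) : Fintype (GaloisField 2 n) := Fintype.ofFinite _

/-- The absolute trace from `GF(2^n)` to `GF(2)`. -/
noncomputable def tr (n : ℕ) (x : GaloisField 2 n) : ZMod 2 :=
  Algebra.trace (ZMod 2) (GaloisField 2 n) x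

/-- The Walsh transform of `F` at `(u, v)`. -/
noncomputable def W (n : ℕ) (F : GaloisField 2 n → GaloisField 2 n)
    (u v : GaloisField 2 n) : ℤ :=
  ∑ x : GaloisField 2 n, (-1 : ℤ) ^ (tr n (v * F x) + tr n (u * x)).val

/-- `F` is an o-polynomial: for every nonzero `b` and every `a`, the equation
`F x + b * x = a` has 0 or 2 solutions. -/
def IsOPoly (n : ℕ) (F : GaloisField 2 n → GaloisField 2 n) : Prop :=
  ∀ b : GaloisField 2 n, b ≠ 0 → ∀ a : GaloisField 2 n,
    Nat.card {x : GaloisField 2 n // F x + b * x = a} = 0 ∨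
    Nat.card {x : GaloisField 2 n // F x + b * x = a} = 2

/-!
Fix `b ≠ 0` and put `G x = F x + b x`; with the character `ψ = (-1)^tr` one has
`W_F(b v, v) = ∑ₓ ψ(v G(x))`. Expanding the third factor as a sum over `z` splits the
double sum over `(v₁, v₂)` into `∑_z (∑_v W_F(b v, v) ψ(v G(z)))²`, and by orthogonality
of characters the inner sum is `2^n` times the size of the fibre of `G` through `z`, which
is `2` for an o-polynomial. Each `b` thus contributes `2^n (2^(n+1))² = 2^(3n+2)`.
-/

namespace AddChar

variable {R R' α : Type*} [CommRing R] [CommRing R'] [Fintype α]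

def charSum (ψ : AddChar R R') (G : α → R) (v : R) : R' :=
  ∑ x, ψ (v * G x)

theorem charSum_add (ψ : AddChar R R') (G : α → R) (v₁ v₂ : R) :
    charSum ψ G (v₁ + v₂) = ∑ z, ψ (v₁ * G z) * ψ (v₂ * G z) := by
  simp only [charSum, add_mul, map_add_eq_mul]

theorem sum_charSum_mul [Fintype R] [IsDomain R'] {ψ : AddChar R R'} (hψ : IsPrimitive ψ)
    (G : α → R) (a : R) :
    ∑ v, charSum ψ G v * ψ (v * a) = Fintype.card R * #{x | G x = -a} := by
  calc ∑ v, charSum ψ G v * ψ (v * a)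
      = ∑ x, ∑ v, ψ (v * (G x + a)) := by
        simp only [charSum, sum_mul, mul_add, map_add_eq_mul]
        exact sum_comm
    _ = ∑ x, if G x = -a then (Fintype.card R : R') else 0 := by
        simp only [sum_mulShift _ hψ, add_eq_zero_iff_eq_neg, Nat.cast_ite, Nat.cast_zero]
    _ = Fintype.card R * #{x | G x = -a} := by
        rw [sum_ite, sum_const_zero, add_zero, sum_const, nsmul_eq_mul, mul_comm]

theorem sum_sum_charSum_mul_charSum_mul_charSum_add [Fintype R] [IsDomain R']
    {ψ : AddChar R R'} (hψ : IsPrimitive ψ) (G : α → R) :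
    ∑ v₁, ∑ v₂, charSum ψ G v₁ * charSum ψ G v₂ * charSum ψ G (v₁ + v₂) =
      ∑ z, (Fintype.card R * #{x | G x = -G z} : R') ^ 2 := by
  calc ∑ v₁, ∑ v₂, charSum ψ G v₁ * charSum ψ G v₂ * charSum ψ G (v₁ + v₂)
      = ∑ v₁, ∑ v₂, ∑ z,
          (charSum ψ G v₁ * ψ (v₁ * G z)) * (charSum ψ G v₂ * ψ (v₂ * G z)) := by
        simp only [charSum_add, mul_sum, mul_mul_mul_comm]
    _ = ∑ z, ∑ v₁, ∑ v₂,
          (charSum ψ G v₁ * ψ (v₁ * G z)) * (charSum ψ G v₂ * ψ (v₂ * G z)) :=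
        (sum_congr rfl fun _ _ => sum_comm).trans sum_comm
    _ = ∑ z, (∑ v, charSum ψ G v * ψ (v * G z)) ^ 2 := by
        simp only [sq, sum_mul_sum]
    _ = _ := by simp only [sum_charSum_mul hψ]

end AddChar

open AddChar

noncomputable def traceChar (n : ℕ) : AddChar (GaloisField 2 n) ℤ :=
  (zmodChar 2 (by norm_num : (-1 : ℤ) ^ 2 = 1)).compAddMonoidHom
    (Algebra.trace (ZMod 2) (GaloisField 2 n)).toAddMonoidHom

theorem traceChar_apply (n : ℕ) (x : GaloisField 2 n) : traceChar n x = (-1) ^ (tr n x).val :=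
  rfl

theorem traceChar_isPrimitive (n : ℕ) : (traceChar n).IsPrimitive := by
  refine IsPrimitive.of_ne_one fun h => ?_
  obtain ⟨x, hx⟩ := Algebra.trace_surjective (ZMod 2) (GaloisField 2 n) 1
  have := DFunLike.congr_fun h x
  rw [traceChar_apply, tr, hx, one_apply] at this
  exact absurd this (by decide)

theorem W_mul_self_eq_charSum (n : ℕ) (F : GaloisField 2 n → GaloisField 2 n)
    (b v : GaloisField 2 n) :
    W n F (b * v) v = charSum (traceChar n) (fun x => F x + b * x) v := by
  refine sum_congr rfl fun x _ => ?_
  rw [traceChar_apply, tr, tr, tr, ← map_add]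
  congr 3
  ring

theorem IsOPoly.card_fiber {n : ℕ} {F : GaloisField 2 n → GaloisField 2 n} (hF : IsOPoly n F)
    {b : GaloisField 2 n} (hb : b ≠ 0) (z : GaloisField 2 n) :
    #{x | F x + b * x = F z + b * z} = 2 := by
  rw [← Fintype.card_subtype, ← Nat.card_eq_fintype_card]
  have : Nonempty {x // F x + b * x = F z + b * z} := ⟨⟨z, rfl⟩⟩
  exact (hF b hb _).resolve_left Nat.card_pos.ne'

theorem fintype_card_galoisField {n : ℕ} (hn : 0 < n) :
    Fintype.card (GaloisField 2 n) = 2 ^ n := by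
  rw [← Nat.card_eq_fintype_card, GaloisField.card 2 n hn.ne']

theorem IsOPoly.sum_sum_W_mul_W_mul_W_add {n : ℕ} (hn : 0 < n)
    {F : GaloisField 2 n → GaloisField 2 n} (hF : IsOPoly n F) {b : GaloisField 2 n}
    (hb : b ≠ 0) :
    ∑ v₁ : GaloisField 2 n, ∑ v₂ : GaloisField 2 n,
        W n F (b * v₁) v₁ * W n F (b * v₂) v₂ * W n F (b * (v₁ + v₂)) (v₁ + v₂) =
      2 ^ (3 * n + 2) := by
  simp only [W_mul_self_eq_charSum,
    sum_sum_charSum_mul_charSum_mul_charSum_add (traceChar_isPrimitive n), CharTwo.neg_eq,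
    hF.card_fiber hb, sum_const, card_univ, fintype_card_galoisField hn]
  push_cast
  ring

theorem o_polynomial_total_triple_walsh_sum (n : ℕ) (hn : 0 < n)
    (F : GaloisField 2 n → GaloisField 2 n) (hF : IsOPoly n F) :
    ∑ b ∈ univ.filter (fun b : GaloisField 2 n => b ≠ 0),
        ∑ v₁ : GaloisField 2 n, ∑ v₂ : GaloisField 2 n,
          W n F (b * v₁) v₁ * W n F (b * v₂) v₂ * W n F (b * (v₁ + v₂)) (v₁ + v₂) =
      ((2 : ℤ) ^ n - 1) * 2 ^ (3 * n + 2) := by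
  rw [sum_congr rfl fun b hb => hF.sum_sum_W_mul_W_mul_W_add hn (mem_filter.1 hb).2, sum_const,
    filter_ne', card_erase_of_mem (mem_univ 0), card_univ, fintype_card_galoisField hn,
    nsmul_eq_mul, Nat.cast_sub Nat.one_le_two_pow]
  push_cast
  ring
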